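/- arXiv:2509.03045 — 2 statements merged into one kernel-verified Lean document; each statement's English description precedes it below -/
import Mathlib

section
/- Let d ≥ 2, let b be a collision kernel satisfying the Lévy condition, and let C_K, C_P > 0. Suppose that for every smooth F : S^{d-1} → (0,∞) with F(−σ) = F(σ) the following two inequalities hold: (i) C_K ∫_{S^{d-1}} |∇_σ log F|² F dσ ≤ ∫_{S^{d-1}} Γ²_{𝓑,Δ}(log F, log F) F dσ, and (ii) ∬_{S^{d-1}×S^{d-1}} (F(σ') − F(σ))² b(σ'·σ) dσ' dσ ≤ C_P ∫_{S^{d-1}} |∇_σ F|² dσ. Then LS(2C_K/C_P, b) holds. -/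
open MeasureTheory
open scoped RealInnerProductSpace

noncomputable section

/-- Euclidean space `ℝ^d`. -/
abbrev E (d : ℕ) : Type := EuclideanSpace ℝ (Fin d)

/-- The unit sphere `S^{d-1}` of `ℝ^d`. -/
abbrev Sph (d : ℕ) : Type := Metric.sphere (0 : E d) 1

/-- The surface measure on the unit sphere, realized as a Hausdorff measure. -/
def sphMeasure (d : ℕ) : Measure (Sph d) := μH[(d : ℝ) - 1]

open Classical in
/-- The 0-homogeneous extension of a function defined on the unit sphere. -/
def homogExt {d : ℕ} (F : Sph d → ℝ) (x : E d) : ℝ :=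
  if hx : x = 0 then 0
  else F ⟨‖x‖⁻¹ • x, by
    rw [mem_sphere_zero_iff_norm, norm_smul, norm_inv, norm_norm,
      inv_mul_cancel₀ (norm_ne_zero_iff.mpr hx)]⟩

/-- Smoothness of a function on the sphere, via its 0-homogeneous extension. -/
def SphSmooth {d : ℕ} (F : Sph d → ℝ) : Prop :=
  ContDiffOn ℝ (⊤ : ℕ∞) (homogExt F) {x : E d | x ≠ 0}

/-- Spherical gradient: the Euclidean gradient of the 0-homogeneous extension. -/
def sphGrad {d : ℕ} (F : Sph d → ℝ) (σ : Sph d) : E d :=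
  gradient (homogExt F) (σ : E d)

/-- Euclidean Laplacian of a function on `ℝ^d`. -/
def lapl {d : ℕ} (f : E d → ℝ) (x : E d) : ℝ :=
  ∑ i : Fin d,
    fderiv ℝ (fun y => fderiv ℝ f y (EuclideanSpace.single i 1)) x (EuclideanSpace.single i 1)

/-- Spherical Laplacian: the Euclidean Laplacian of the 0-homogeneous extension. -/
def sphLap {d : ℕ} (F : Sph d → ℝ) (σ : Sph d) : ℝ :=
  lapl (homogExt F) (σ : E d)

/-- The spherical linear Boltzmann operator `𝓑` with kernel `b`. -/
def sphB {d : ℕ} (b : ℝ → ℝ) (F : Sph d → ℝ) (σ : Sph d) : ℝ :=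
  ∫ (σ' : Sph d), (F σ' - F σ) * b ⟪(σ' : E d), (σ : E d)⟫ ∂(sphMeasure d)

/-- The intertwined iterated carré du champ `Γ²_{𝓑,Δ}(g,g)`. -/
def Gamma2BD {d : ℕ} (b : ℝ → ℝ) (g : Sph d → ℝ) (σ : Sph d) : ℝ :=
  (1 / 2) * sphB b (fun τ => ‖sphGrad g τ‖ ^ 2) σ
    - ⟪sphGrad g σ, sphGrad (fun τ => sphB b g τ) σ⟫

/-- The iterated carré du champ `Γ²_{Δ,Δ}(g,g)` of the spherical Laplacian. -/
def Gamma2DD {d : ℕ} (g : Sph d → ℝ) (σ : Sph d) : ℝ :=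
  (1 / 2) * sphLap (fun τ => ‖sphGrad g τ‖ ^ 2) σ
    - ⟪sphGrad g σ, sphGrad (fun τ => sphLap g τ) σ⟫

/-- A collision kernel: non-negative, measurable, satisfying the Lévy condition. -/
def LevyKernel (d : ℕ) (b : ℝ → ℝ) : Prop :=
  Measurable b ∧ (∀ c ∈ Set.Icc (-1 : ℝ) 1, 0 ≤ b c) ∧
    ∀ e : Sph d,
      Integrable
        (fun σ' : Sph d => (1 - ⟪(e : E d), (σ' : E d)⟫ ^ 2) * b ⟪(e : E d), (σ' : E d)⟫)
        (sphMeasure d)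

/-- The log-Sobolev inequality `LS(Λ, b)` on the sphere. -/
def LS (d : ℕ) (b : ℝ → ℝ) (Λ : ℝ) : Prop :=
  ∀ f : Sph d → ℝ, SphSmooth f → (∀ σ, 0 < f σ) → (∀ σ, f (-σ) = f σ) →
    Λ * ∫ (σ : Sph d), (∫ (σ' : Sph d),
          (f σ' - f σ) ^ 2 / (f σ' + f σ) * b ⟪(σ' : E d), (σ : E d)⟫ ∂(sphMeasure d))
        ∂(sphMeasure d)
      ≤ ∫ (σ : Sph d), Gamma2BD b (fun τ => Real.log (f τ)) σ * f σ ∂(sphMeasure d)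

section AuxLemmas

open scoped ENNReal NNReal

variable {d : ℕ}

lemma sph_ne_zero (σ : Sph d) : (σ : E d) ≠ 0 := by
  intro h
  have := norm_eq_of_mem_sphere σ
  rw [h, norm_zero] at this
  norm_num at this

lemma homogExt_coe (F : Sph d → ℝ) (σ : Sph d) : homogExt F (σ : E d) = F σ := by
  rw [homogExt, dif_neg (sph_ne_zero σ)]
  congr 1
  ext1
  simp [norm_eq_of_mem_sphere σ]

lemma homogExt_comp (φ : ℝ → ℝ) (hφ : φ 0 = 0) (F : Sph d → ℝ) :
    homogExt (fun τ => φ (F τ)) = fun x => φ (homogExt F x) := by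
  funext x
  by_cases hx : x = 0
  · simp [homogExt, hx, hφ]
  · simp [homogExt, hx]

lemma homogExt_pos {F : Sph d → ℝ} (hF : ∀ σ, 0 < F σ) {x : E d} (hx : x ≠ 0) :
    0 < homogExt F x := by
  rw [homogExt, dif_neg hx]; exact hF _

lemma HasGradientAt.comp_real {F : Type*} [NormedAddCommGroup F] [InnerProductSpace ℝ F]
    [CompleteSpace F] {h : F → ℝ} {g : F} {x : F} (hh : HasGradientAt h g x)
    {φ : ℝ → ℝ} {c : ℝ} (hφ : HasDerivAt φ c (h x)) :
    HasGradientAt (fun y => φ (h y)) (c • g) x := by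
  have H : HasFDerivAt (fun y => φ (h y)) (c • (InnerProductSpace.toDual ℝ F g)) x :=
    hφ.comp_hasFDerivAt x hh.hasFDerivAt
  rw [hasGradientAt_iff_hasFDerivAt]
  convert H using 2
  ext z
  simp [InnerProductSpace.toDual_apply_apply, real_inner_smul_left]
  ext z
  simp [InnerProductSpace.toDual_apply_apply, real_inner_smul_left]

lemma isOpen_ne_zero : IsOpen {x : E d | x ≠ 0} := isOpen_ne

lemma sphSmooth_sqrt {f : Sph d → ℝ} (hf : SphSmooth f) (hfpos : ∀ σ, 0 < f σ) :
    SphSmooth (fun τ => Real.sqrt (f τ)) := by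
  rw [SphSmooth, homogExt_comp Real.sqrt Real.sqrt_zero f]
  intro x hx
  exact ((Real.contDiffAt_sqrt (ne_of_gt (homogExt_pos hfpos hx))).comp x
    (hf.contDiffAt (isOpen_ne_zero.mem_nhds hx))).contDiffWithinAt

lemma diffAt_of_sphSmooth {f : Sph d → ℝ} (hf : SphSmooth f) (σ : Sph d) :
    DifferentiableAt ℝ (homogExt f) (σ : E d) :=
  (hf.contDiffAt (isOpen_ne_zero.mem_nhds (sph_ne_zero σ))).differentiableAt (by simp)

lemma sphGrad_log {f : Sph d → ℝ} (hf : SphSmooth f) (hfpos : ∀ σ, 0 < f σ) (σ : Sph d) :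
    sphGrad (fun τ => Real.log (f τ)) σ = (f σ)⁻¹ • gradient (homogExt f) (σ : E d) := by
  rw [sphGrad, homogExt_comp Real.log Real.log_zero f]
  have h1 := (diffAt_of_sphSmooth hf σ).hasGradientAt
  have h2 : HasDerivAt Real.log (homogExt f (σ : E d))⁻¹ (homogExt f (σ : E d)) :=
    Real.hasDerivAt_log (by rw [homogExt_coe]; exact (hfpos σ).ne')
  have := (h1.comp_real h2).gradient
  rw [homogExt_coe] at this
  exact this

lemma sphGrad_sqrt {f : Sph d → ℝ} (hf : SphSmooth f) (hfpos : ∀ σ, 0 < f σ) (σ : Sph d) :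
    sphGrad (fun τ => Real.sqrt (f τ)) σ
      = (1 / (2 * Real.sqrt (f σ))) • gradient (homogExt f) (σ : E d) := by
  rw [sphGrad, homogExt_comp Real.sqrt Real.sqrt_zero f]
  have h1 := (diffAt_of_sphSmooth hf σ).hasGradientAt
  have h2 : HasDerivAt Real.sqrt (1 / (2 * Real.sqrt (homogExt f (σ : E d))))
      (homogExt f (σ : E d)) :=
    Real.hasDerivAt_sqrt (by rw [homogExt_coe]; exact (hfpos σ).ne')
  have := (h1.comp_real h2).gradient
  rw [homogExt_coe] at this
  exact this

lemma grad_identity {f : Sph d → ℝ} (hf : SphSmooth f) (hfpos : ∀ σ, 0 < f σ) (σ : Sph d) :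
    ‖sphGrad (fun τ => Real.log (f τ)) σ‖ ^ 2 * f σ
      = 4 * ‖sphGrad (fun τ => Real.sqrt (f τ)) σ‖ ^ 2 := by
  rw [sphGrad_log hf hfpos σ, sphGrad_sqrt hf hfpos σ, norm_smul, norm_smul]
  have h1 : (0:ℝ) < f σ := hfpos σ
  have h2 : (0:ℝ) < Real.sqrt (f σ) := Real.sqrt_pos.2 h1
  have h3 : Real.sqrt (f σ) ^ 2 = f σ := Real.sq_sqrt h1.le
  rw [Real.norm_eq_abs, Real.norm_eq_abs, abs_of_pos (by positivity),
    abs_of_pos (by positivity)]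
  field_simp
  rw [h3]; ring

lemma norm_coe_sph (σ : Sph d) : ‖(σ : E d)‖ = 1 := norm_eq_of_mem_sphere σ

lemma inner_sph_le_one (σ σ' : Sph d) : |⟪(σ' : E d), (σ : E d)⟫| ≤ 1 := by
  have := abs_real_inner_le_norm (σ' : E d) (σ : E d)
  rwa [norm_coe_sph, norm_coe_sph, mul_one] at this

lemma exists_quad_bound {u : Sph d → ℝ} (hu : SphSmooth u) (hue : ∀ σ, u (-σ) = u σ) :
    ∃ C : ℝ, 0 ≤ C ∧ ∀ σ σ' : Sph d,
      (u σ' - u σ) ^ 2 ≤ C * (1 - ⟪(σ' : E d), (σ : E d)⟫ ^ 2) := by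
  classical
  set K : Set (E d) := {x | 1/2 ≤ ‖x‖ ∧ ‖x‖ ≤ 1} with hK
  have hKeq : K = Metric.closedBall (0 : E d) 1 ∩ {x : E d | 1/2 ≤ ‖x‖} := by
    ext x
    simp [hK, Metric.mem_closedBall, dist_zero_right, and_comm]
  have hKcompact : IsCompact K := by
    rw [hKeq]
    exact (isCompact_closedBall _ _).inter_right
      (isClosed_le continuous_const continuous_norm)
  have hKsub : K ⊆ {x : E d | x ≠ 0} := by
    intro x hx h0
    rw [h0] at hx
    simp [hK] at hx
    norm_num at hx
  have hcont : ContinuousOn (fun x => ‖fderiv ℝ (homogExt u) x‖) K :=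
    ((hu.continuousOn_fderiv_of_isOpen isOpen_ne_zero (by simp)).mono hKsub).norm
  obtain ⟨M0, hM0⟩ := hKcompact.exists_bound_of_continuousOn hcont
  set M : ℝ := max M0 0 with hM
  have hMnn : 0 ≤ M := le_max_right _ _
  have hfb : ∀ x ∈ K, ‖fderiv ℝ (homogExt u) x‖ ≤ M := by
    intro x hx
    have := hM0 x hx
    rw [norm_norm] at this
    exact this.trans (le_max_left _ _)
  have hlip : ∀ σ σ' : Sph d, 0 ≤ ⟪(σ' : E d), (σ : E d)⟫ →
      |u σ' - u σ| ≤ M * ‖(σ' : E d) - (σ : E d)‖ := by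
    intro σ σ' ht
    have hseg : segment ℝ ((σ' : E d)) ((σ : E d)) ⊆ K := by
      rintro x ⟨a, b, ha, hb, hab, rfl⟩
      constructor
      · have hx2 : ‖a • (σ' : E d) + b • (σ : E d)‖ ^ 2
            = a^2 + 2*(a*b*⟪(σ' : E d), (σ : E d)⟫) + b^2 := by
          rw [norm_add_sq_real, real_inner_smul_left, real_inner_smul_right,
            norm_smul, norm_smul, norm_coe_sph, norm_coe_sph, Real.norm_eq_abs,
            Real.norm_eq_abs, abs_of_nonneg ha, abs_of_nonneg hb]
          ring
        nlinarith [norm_nonneg (a • (σ' : E d) + b • (σ : E d)),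
          mul_nonneg (mul_nonneg ha hb) ht, sq_nonneg (a - b)]
      · calc ‖a • (σ' : E d) + b • (σ : E d)‖ ≤ ‖a • (σ' : E d)‖ + ‖b • (σ : E d)‖ :=
              norm_add_le _ _
          _ = a + b := by
              rw [norm_smul, norm_smul, norm_coe_sph, norm_coe_sph, Real.norm_eq_abs,
                Real.norm_eq_abs, abs_of_nonneg ha, abs_of_nonneg hb, mul_one, mul_one]
          _ = 1 := hab
    have := Convex.norm_image_sub_le_of_norm_fderiv_le
      (f := homogExt u) (C := M) (s := segment ℝ ((σ' : E d)) ((σ : E d)))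
      (fun x hx => (hu.contDiffAt (isOpen_ne_zero.mem_nhds (hKsub (hseg hx)))).differentiableAt
        (by simp))
      (fun x hx => hfb x (hseg hx)) (convex_segment _ _)
      (right_mem_segment _ _ _) (left_mem_segment _ _ _)
    rw [homogExt_coe, homogExt_coe, Real.norm_eq_abs] at this
    exact this
  refine ⟨2 * M^2, by positivity, fun σ σ' => ?_⟩
  have habs := inner_sph_le_one σ σ'
  by_cases ht : 0 ≤ ⟪(σ' : E d), (σ : E d)⟫
  · have h1 := hlip σ σ' ht
    have h2 : ‖(σ' : E d) - (σ : E d)‖ ^ 2 = 2 - 2 * ⟪(σ' : E d), (σ : E d)⟫ := by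
      rw [norm_sub_sq_real, norm_coe_sph, norm_coe_sph]; ring
    have h3 : (u σ' - u σ)^2 ≤ M^2 * ‖(σ' : E d) - (σ : E d)‖^2 := by
      rw [← sq_abs (u σ' - u σ), ← mul_pow]
      exact pow_le_pow_left₀ (abs_nonneg _) h1 2
    rw [h2] at h3
    have ht1 : ⟪(σ' : E d), (σ : E d)⟫ ≤ 1 := (abs_le.1 habs).2
    nlinarith [sq_nonneg M, mul_nonneg (sq_nonneg M) ht]
  · push_neg at ht
    have hneg : ((-σ' : Sph d) : E d) = -(σ' : E d) := coe_neg_sphere σ'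
    have ht' : 0 ≤ ⟪((-σ' : Sph d) : E d), (σ : E d)⟫ := by
      rw [hneg, inner_neg_left]; linarith
    have h1 := hlip σ (-σ') ht'
    rw [hue σ'] at h1
    have h2 : ‖((-σ' : Sph d) : E d) - (σ : E d)‖ ^ 2
        = 2 + 2 * ⟪(σ' : E d), (σ : E d)⟫ := by
      rw [hneg, norm_sub_sq_real, norm_neg, norm_coe_sph, norm_coe_sph, inner_neg_left]; ring
    have h3 : (u σ' - u σ)^2 ≤ M^2 * ‖((-σ' : Sph d) : E d) - (σ : E d)‖^2 := by
      rw [← sq_abs (u σ' - u σ), ← mul_pow]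
      exact pow_le_pow_left₀ (abs_nonneg _) h1 2
    rw [h2] at h3
    have ht1 : -1 ≤ ⟪(σ' : E d), (σ : E d)⟫ := (abs_le.1 habs).1
    nlinarith [sq_nonneg M, mul_nonneg (sq_nonneg M) (neg_nonneg.2 ht.le)]

/-- The Hausdorff measure of the unit sphere set in `ℝ^{m+1}` (pi-type, sup metric) is finite. -/
lemma hausdorff_sphereSet_lt_top (m : ℕ) :
    μH[(m : ℝ)] {x : Fin (m + 1) → ℝ | ∑ k, x k ^ 2 = 1} < ⊤ := by
  classical
  set n : ℕ := m + 1 with hn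
  have hnpos : (0:ℝ) < n := by positivity
  set s0 : ℝ := Real.sqrt (1 / n) with hs0
  have hs0pos : 0 < s0 := Real.sqrt_pos.2 (by positivity)
  set D : Set (Fin m → ℝ) := {y | ∑ j, y j ^ 2 ≤ 1 - 1 / n} with hD
  set ψ : Fin n → ℝ → (Fin m → ℝ) → (Fin n → ℝ) :=
    fun i ε y => i.insertNth (ε * Real.sqrt (1 - ∑ j, y j ^ 2)) y with hψ
  -- members of D have small coordinates
  have hDcoord : ∀ y ∈ D, ∀ j, |y j| ≤ 1 := by
    intro y hy j
    have h1 : y j ^ 2 ≤ ∑ j', y j' ^ 2 :=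
      Finset.single_le_sum (fun j' _ => sq_nonneg (y j')) (Finset.mem_univ j)
    have h2 : y j ^ 2 ≤ 1 := by
      refine h1.trans (hy.trans ?_)
      have : (0:ℝ) ≤ 1 / n := by positivity
      linarith
    exact (sq_le_one_iff_abs_le_one (y j)).1 h2
  have hDsum : ∀ y ∈ D, 1 / (n:ℝ) ≤ 1 - ∑ j, y j ^ 2 := by
    intro y hy; rw [hD] at hy; simp only [Set.mem_setOf_eq] at hy; linarith
  have hDsumnn : ∀ y ∈ D, 0 ≤ 1 - ∑ j, y j ^ 2 := by
    intro y hy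
    have := hDsum y hy
    have : (0:ℝ) < 1 / n := by positivity
    linarith [hDsum y hy]
  -- the Lipschitz constant
  set K2r : ℝ := 1 + (m : ℝ) / s0 with hK2r
  have hK2rnn : 0 ≤ K2r := by positivity
  set K2 : ℝ≥0 := K2r.toNNReal with hK2
  have hK2coe : (K2 : ℝ) = K2r := Real.coe_toNNReal _ hK2rnn
  -- Lipschitz estimate
  have hlip : ∀ (i : Fin n) (ε : ℝ), |ε| ≤ 1 → LipschitzOnWith K2 (ψ i ε) D := by
    intro i ε hε
    rw [lipschitzOnWith_iff_dist_le_mul]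
    intro y hy z hz
    rw [hK2coe]
    have hdnn : 0 ≤ dist y z := dist_nonneg
    refine (dist_pi_le_iff (by positivity)).2 fun k => ?_
    by_cases hk : k = i
    · subst hk
      simp only [hψ, Fin.insertNth_apply_same]
      rw [Real.dist_eq]
      set u := ∑ j, y j ^ 2
      set v := ∑ j, z j ^ 2
      have huv : |u - v| ≤ 2 * m * dist y z := by
        have h1 : |u - v| ≤ ∑ j, |y j ^ 2 - z j ^ 2| := by
          rw [← Finset.sum_sub_distrib]
          exact Finset.abs_sum_le_sum_abs _ _
        have h2 : ∀ j, |y j ^ 2 - z j ^ 2| ≤ dist y z * 2 := by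
          intro j
          have : y j ^ 2 - z j ^ 2 = (y j - z j) * (y j + z j) := by ring
          rw [this, abs_mul]
          have hd : |y j - z j| ≤ dist y z := by
            rw [← Real.dist_eq]; exact dist_le_pi_dist y z j
          have hs : |y j + z j| ≤ 2 := by
            calc |y j + z j| ≤ |y j| + |z j| := abs_add_le _ _
              _ ≤ 2 := by linarith [hDcoord y hy j, hDcoord z hz j]
          exact mul_le_mul hd hs (abs_nonneg _) hdnn
        calc |u - v| ≤ ∑ j, |y j ^ 2 - z j ^ 2| := h1
          _ ≤ ∑ _j : Fin m, dist y z * 2 := Finset.sum_le_sum fun j _ => h2 j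
          _ = 2 * m * dist y z := by
            rw [Finset.sum_const, Finset.card_univ, Fintype.card_fin]
            push_cast; ring
      -- sqrt estimate
      have ha : 1 / (n:ℝ) ≤ 1 - u := hDsum y hy
      have hc : 1 / (n:ℝ) ≤ 1 - v := hDsum z hz
      have hsa : s0 ≤ Real.sqrt (1 - u) := Real.sqrt_le_sqrt ha
      have hsc : s0 ≤ Real.sqrt (1 - v) := Real.sqrt_le_sqrt hc
      have hsqa : Real.sqrt (1 - u) ^ 2 = 1 - u := Real.sq_sqrt (by linarith [hDsumnn y hy])
      have hsqc : Real.sqrt (1 - v) ^ 2 = 1 - v := Real.sq_sqrt (by linarith [hDsumnn z hz])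
      have hkey : |Real.sqrt (1 - u) - Real.sqrt (1 - v)| * (2 * s0) ≤ |u - v| := by
        have h3 : |Real.sqrt (1 - u) - Real.sqrt (1 - v)|
            * (Real.sqrt (1 - u) + Real.sqrt (1 - v)) = |(1 - u) - (1 - v)| := by
          rw [← abs_of_nonneg (by positivity : (0:ℝ) ≤ Real.sqrt (1-u) + Real.sqrt (1-v)),
            ← abs_mul]
          congr 1
          nlinarith [hsqa, hsqc]
        have h4 : |(1 - u) - (1 - v)| = |u - v| := by
          rw [show (1 - u) - (1 - v) = -(u - v) by ring, abs_neg]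
        calc |Real.sqrt (1 - u) - Real.sqrt (1 - v)| * (2 * s0)
            ≤ |Real.sqrt (1 - u) - Real.sqrt (1 - v)|
              * (Real.sqrt (1 - u) + Real.sqrt (1 - v)) := by
              apply mul_le_mul_of_nonneg_left _ (abs_nonneg _)
              linarith
          _ = |u - v| := by rw [h3, h4]
      have : |ε * Real.sqrt (1 - u) - ε * Real.sqrt (1 - v)| ≤ (m / s0) * dist y z := by
        rw [← mul_sub, abs_mul]
        have h5 : |Real.sqrt (1 - u) - Real.sqrt (1 - v)| ≤ |u - v| / (2 * s0) := by
          rw [le_div_iff₀ (by positivity)]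
          exact hkey
        calc |ε| * |Real.sqrt (1 - u) - Real.sqrt (1 - v)|
            ≤ 1 * (|u - v| / (2 * s0)) := mul_le_mul hε h5 (abs_nonneg _) zero_le_one
          _ = |u - v| / (2 * s0) := one_mul _
          _ ≤ (2 * m * dist y z) / (2 * s0) := by gcongr
          _ = (m / s0) * dist y z := by field_simp
      refine this.trans ?_
      rw [hK2r]
      have : (m / s0) * dist y z ≤ (1 + m / s0) * dist y z := by
        apply mul_le_mul_of_nonneg_right _ hdnn
        linarith
      exact this
    · obtain ⟨j, rfl⟩ := Fin.exists_succAbove_eq hk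
      simp only [hψ, Fin.insertNth_apply_succAbove]
      calc dist (y j) (z j) ≤ dist y z := dist_le_pi_dist y z j
        _ ≤ K2r * dist y z := by
            rw [hK2r]
            nlinarith [div_nonneg (Nat.cast_nonneg (α := ℝ) m) hs0pos.le]
  -- coverage
  set T : Set (Fin n → ℝ) := {x | ∑ k, x k ^ 2 = 1} with hT
  have hcover : T ⊆ ⋃ i : Fin n, (ψ i 1 '' D ∪ ψ i (-1) '' D) := by
    intro x hx
    rw [hT] at hx
    simp only [Set.mem_setOf_eq] at hx
    obtain ⟨i, -, hi⟩ := Finset.exists_max_image Finset.univ (fun k => x k ^ 2)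
      ⟨0, Finset.mem_univ 0⟩
    have hxi : 1 / (n:ℝ) ≤ x i ^ 2 := by
      have h1 : ∑ k, x k ^ 2 ≤ Finset.univ.card • (x i ^ 2) :=
        Finset.sum_le_card_nsmul _ _ _ (fun k _ => hi k (Finset.mem_univ k))
      rw [Finset.card_univ, Fintype.card_fin, nsmul_eq_mul] at h1
      rw [hx] at h1
      rw [div_le_iff₀ hnpos]
      linarith
    set y : Fin m → ℝ := i.removeNth x with hyy
    have hsum : ∑ j, y j ^ 2 = 1 - x i ^ 2 := by
      have := Fin.sum_univ_succAbove (fun k => x k ^ 2) i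
      rw [hx] at this
      simp only [hyy, Fin.removeNth]
      linarith
    have hyD : y ∈ D := by
      rw [hD]
      simp only [Set.mem_setOf_eq, hsum]
      linarith
    have hsq : Real.sqrt (1 - ∑ j, y j ^ 2) = |x i| := by
      rw [hsum, show (1:ℝ) - (1 - x i ^ 2) = x i ^ 2 by ring, Real.sqrt_sq_eq_abs]
    rw [Set.mem_iUnion]
    refine ⟨i, ?_⟩
    rcases le_or_gt 0 (x i) with hxi0 | hxi0
    · left
      refine ⟨y, hyD, ?_⟩
      simp only [hψ]
      rw [hsq, one_mul, abs_of_nonneg hxi0, hyy]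
      exact Fin.insertNth_self_removeNth i x
    · right
      refine ⟨y, hyD, ?_⟩
      simp only [hψ]
      rw [hsq, abs_of_neg hxi0, hyy]
      rw [show -1 * -x i = x i by ring]
      exact Fin.insertNth_self_removeNth i x
  -- measure estimates
  have hm0 : (0:ℝ) ≤ (m:ℝ) := Nat.cast_nonneg m
  have hDvol : μH[(m:ℝ)] D < ⊤ := by
    have hexp : ((m:ℝ)) = ((Fintype.card (Fin m) : ℕ) : ℝ) := by simp
    rw [hexp, hausdorffMeasure_pi_real]
    have hDsub : D ⊆ Metric.closedBall (0 : Fin m → ℝ) 1 := by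
      intro y hy
      rw [Metric.mem_closedBall, dist_zero_right]
      by_cases hm : Nonempty (Fin m)
      · refine (pi_norm_le_iff_of_nonneg zero_le_one).2 fun j => ?_
        rw [Real.norm_eq_abs]
        exact hDcoord y hy j
      · simp only [not_nonempty_iff] at hm
        have : y = 0 := Subsingleton.elim y 0
        rw [this, norm_zero]
        norm_num
    exact lt_of_le_of_lt (measure_mono hDsub) ((isCompact_closedBall _ _).measure_lt_top)
  have hcap : ∀ (i : Fin n) (ε : ℝ), |ε| ≤ 1 →
      μH[(m:ℝ)] (ψ i ε '' D) ≤ (K2 : ℝ≥0∞) ^ (m:ℝ) * μH[(m:ℝ)] D :=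
    fun i ε hε => (hlip i ε hε).hausdorffMeasure_image_le hm0
  set Q : ℝ≥0∞ := (K2 : ℝ≥0∞) ^ (m:ℝ) * μH[(m:ℝ)] D with hQ
  have hQlt : Q < ⊤ := by
    rw [hQ]
    exact ENNReal.mul_lt_top
      (ENNReal.rpow_lt_top_of_nonneg hm0 ENNReal.coe_ne_top) hDvol
  have hTbound : μH[(m:ℝ)] T ≤ (n : ℝ≥0∞) * (2 * Q) := by
    calc μH[(m:ℝ)] T ≤ μH[(m:ℝ)] (⋃ i : Fin n, (ψ i 1 '' D ∪ ψ i (-1) '' D)) :=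
          measure_mono hcover
      _ ≤ ∑' i : Fin n, μH[(m:ℝ)] (ψ i 1 '' D ∪ ψ i (-1) '' D) := measure_iUnion_le _
      _ ≤ ∑' _i : Fin n, 2 * Q := by
          refine ENNReal.tsum_le_tsum fun i => ?_
          calc μH[(m:ℝ)] (ψ i 1 '' D ∪ ψ i (-1) '' D)
              ≤ μH[(m:ℝ)] (ψ i 1 '' D) + μH[(m:ℝ)] (ψ i (-1) '' D) := measure_union_le _ _
            _ ≤ Q + Q := add_le_add (hcap i 1 (by norm_num)) (hcap i (-1) (by norm_num))
            _ = 2 * Q := by ring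
      _ = (n : ℝ≥0∞) * (2 * Q) := by
          rw [tsum_fintype, Finset.sum_const, Finset.card_univ, Fintype.card_fin,
            nsmul_eq_mul]
  refine lt_of_le_of_lt hTbound ?_
  exact ENNReal.mul_lt_top (by simp) (ENNReal.mul_lt_top (by norm_num) hQlt)

lemma sphMeasure_univ_lt_top (m : ℕ) : sphMeasure (m + 1) Set.univ < ⊤ := by
  have hexp : ((m + 1 : ℕ) : ℝ) - 1 = (m : ℝ) := by push_cast; ring
  have h0 : (0:ℝ) ≤ (m:ℝ) := Nat.cast_nonneg m
  have h1 : sphMeasure (m+1) Set.univ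
      = μH[(m:ℝ)] (Metric.sphere (0 : E (m+1)) 1 : Set (E (m+1))) := by
    rw [sphMeasure, hexp,
      ← (isometry_subtype_coe :
          Isometry ((↑) : Sph (m+1) → E (m+1))).hausdorffMeasure_image (Or.inl h0) Set.univ,
      Set.image_univ, Subtype.range_coe]
  rw [h1]
  set e := WithLp.equiv 2 (Fin (m+1) → ℝ) with he
  have hLip : LipschitzWith ((Fintype.card (Fin (m+1)) : ℝ≥0) ^ (1 / (2:ℝ≥0∞)).toReal) e.symm :=
    PiLp.lipschitzWith_toLp 2 (fun _ : Fin (m+1) => ℝ)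
  have h2 : (Metric.sphere (0 : E (m+1)) 1 : Set (E (m+1)))
      = e.symm '' (e '' (Metric.sphere (0 : E (m+1)) 1)) := (Equiv.symm_image_image _ _).symm
  have h3 : e '' (Metric.sphere (0 : E (m+1)) 1 : Set (E (m+1)))
      ⊆ {x : Fin (m + 1) → ℝ | ∑ k, x k ^ 2 = 1} := by
    rintro x ⟨σ, hσ, rfl⟩
    rw [mem_sphere_zero_iff_norm] at hσ
    rw [EuclideanSpace.norm_eq] at hσ
    simp only [Set.mem_setOf_eq]
    have : ∑ k, ‖σ k‖ ^ 2 = 1 := Real.sqrt_eq_one.1 hσ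
    simpa [he, Real.norm_eq_abs, sq_abs] using this
  have h4 := hLip.hausdorffMeasure_image_le h0
    (e '' (Metric.sphere (0 : E (m+1)) 1 : Set (E (m+1))))
  rw [Equiv.symm_image_image] at h4
  exact lt_of_le_of_lt (h4.trans (mul_le_mul_right (measure_mono h3) _))
    (ENNReal.mul_lt_top (ENNReal.rpow_lt_top_of_nonneg h0 ENNReal.coe_ne_top)
      (hausdorff_sphereSet_lt_top m))

instance sphMeasure_finite (m : ℕ) : IsFiniteMeasure (sphMeasure (m + 1)) :=
  ⟨sphMeasure_univ_lt_top m⟩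

lemma ratio_le_sqrt (a c : ℝ) (ha : 0 < a) (hc : 0 < c) :
    (a - c) ^ 2 / (a + c) ≤ 2 * (Real.sqrt a - Real.sqrt c) ^ 2 := by
  have hsa := Real.sq_sqrt ha.le
  have hsc := Real.sq_sqrt hc.le
  have hsapos := Real.sqrt_pos.2 ha
  have hscpos := Real.sqrt_pos.2 hc
  rw [div_le_iff₀ (by positivity)]
  nlinarith [sq_nonneg ((Real.sqrt a - Real.sqrt c) ^ 2), sq_nonneg (Real.sqrt a - Real.sqrt c),
    sq_nonneg (Real.sqrt a + Real.sqrt c), mul_pos hsapos hscpos]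

lemma sqrt_le_ratio (a c : ℝ) (ha : 0 < a) (hc : 0 < c) :
    (Real.sqrt a - Real.sqrt c) ^ 2 ≤ (a - c) ^ 2 / (a + c) := by
  rw [le_div_iff₀ (by positivity)]
  nlinarith [Real.sq_sqrt ha.le, Real.sq_sqrt hc.le, Real.sqrt_pos.2 ha, Real.sqrt_pos.2 hc,
    mul_pos (Real.sqrt_pos.2 ha) (Real.sqrt_pos.2 hc),
    mul_nonneg (mul_pos (Real.sqrt_pos.2 ha) (Real.sqrt_pos.2 hc)).le
      (sq_nonneg (Real.sqrt a - Real.sqrt c))]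

end AuxLemmas

/-- Reduction: a `Γ²` criterion with constant `C_K` together with a
Hardy-type inequality with constant `C_P` imply the log-Sobolev inequality `LS(2C_K/C_P, b)`. -/
theorem logSobolev_reduction
    (d : ℕ) (hd : 2 ≤ d) (b : ℝ → ℝ) (hb : LevyKernel d b)
    (CK CP : ℝ) (hCK : 0 < CK) (hCP : 0 < CP)
    (hGamma2 : ∀ F : Sph d → ℝ, SphSmooth F → (∀ σ, 0 < F σ) → (∀ σ, F (-σ) = F σ) →
      CK * ∫ (σ : Sph d), ‖sphGrad (fun τ => Real.log (F τ)) σ‖ ^ 2 * F σ ∂(sphMeasure d)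
        ≤ ∫ (σ : Sph d), Gamma2BD b (fun τ => Real.log (F τ)) σ * F σ ∂(sphMeasure d))
    (hHardy : ∀ F : Sph d → ℝ, SphSmooth F → (∀ σ, 0 < F σ) → (∀ σ, F (-σ) = F σ) →
      ∫ (σ : Sph d), (∫ (σ' : Sph d),
            (F σ' - F σ) ^ 2 * b ⟪(σ' : E d), (σ : E d)⟫ ∂(sphMeasure d)) ∂(sphMeasure d)
        ≤ CP * ∫ (σ : Sph d), ‖sphGrad F σ‖ ^ 2 ∂(sphMeasure d)) :
    LS d b (2 * CK / CP) := by
  obtain ⟨m, rfl⟩ : ∃ m, d = m + 1 := ⟨d - 1, by omega⟩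
  intro f hf hfpos hfe
  -- the square root of f
  set u : Sph (m+1) → ℝ := fun τ => Real.sqrt (f τ) with hudef
  have hus : SphSmooth u := sphSmooth_sqrt hf hfpos
  have hupos : ∀ σ, 0 < u σ := fun σ => Real.sqrt_pos.2 (hfpos σ)
  have hue : ∀ σ, u (-σ) = u σ := fun σ => by simp only [hudef, hfe σ]
  have hfu : ∀ τ, Real.sqrt (f τ) = u τ := fun τ => rfl
  obtain ⟨C, hC0, hCb⟩ := exists_quad_bound hus hue
  -- continuity of f and u
  have hfc : Continuous f := by
    have h1 : Continuous fun τ : Sph (m+1) => homogExt f ↑τ :=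
      hf.continuousOn.comp_continuous continuous_subtype_val fun τ => sph_ne_zero τ
    have h2 : (fun τ : Sph (m+1) => homogExt f ↑τ) = f := funext (homogExt_coe f)
    rwa [h2] at h1
  have huc : Continuous u := Real.continuous_sqrt.comp hfc
  -- nonnegativity of the kernel at inner products of sphere points
  have hbnn : ∀ σ σ' : Sph (m+1), 0 ≤ b ⟪(σ' : E (m+1)), (σ : E (m+1))⟫ := fun σ σ' =>
    hb.2.1 _ (Set.mem_Icc.2 (abs_le.1 (inner_sph_le_one σ σ')))
  have ht2 : ∀ σ σ' : Sph (m+1), 0 ≤ 1 - ⟪(σ' : E (m+1)), (σ : E (m+1))⟫ ^ 2 := by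
    intro σ σ'
    obtain ⟨h1, h2⟩ := abs_le.1 (inner_sph_le_one σ σ')
    nlinarith
  -- measurability of the integrands
  have hinner : Continuous fun p : Sph (m+1) × Sph (m+1) => ⟪((p.2 : Sph (m+1)) : E (m+1)), ((p.1 : Sph (m+1)) : E (m+1))⟫ :=
    continuous_inner.comp ((continuous_subtype_val.comp continuous_snd).prodMk
      (continuous_subtype_val.comp continuous_fst))
  have hG2meas : Measurable fun p : Sph (m+1) × Sph (m+1) =>
      (u p.2 - u p.1) ^ 2 * b ⟪((p.2 : Sph (m+1)) : E (m+1)), ((p.1 : Sph (m+1)) : E (m+1))⟫ :=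
    (((huc.comp continuous_snd).sub (huc.comp continuous_fst)).pow 2).measurable.mul
      (hb.1.comp hinner.measurable)
  have hG1meas : Measurable fun p : Sph (m+1) × Sph (m+1) =>
      (f p.2 - f p.1) ^ 2 / (f p.2 + f p.1)
        * b ⟪((p.2 : Sph (m+1)) : E (m+1)), ((p.1 : Sph (m+1)) : E (m+1))⟫ :=
    (Continuous.div (((hfc.comp continuous_snd).sub (hfc.comp continuous_fst)).pow 2)
      ((hfc.comp continuous_snd).add (hfc.comp continuous_fst))
      (fun p => by
        simp only [Pi.add_apply, Function.comp_apply]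
        exact ne_of_gt (by linarith [hfpos p.1, hfpos p.2]))).measurable.mul
      (hb.1.comp hinner.measurable)
  -- the dominating integrable function
  have hW : ∀ σ : Sph (m+1), Integrable
      (fun σ' : Sph (m+1) => (2 * C) * ((1 - ⟪(σ : E (m+1)), (σ' : E (m+1))⟫ ^ 2) * b ⟪(σ : E (m+1)), (σ' : E (m+1))⟫))
      (sphMeasure (m+1)) := fun σ => (hb.2.2 σ).const_mul (2 * C)
  -- integrability of the inner integrands
  have hg2i : ∀ σ : Sph (m+1), Integrable
      (fun σ' : Sph (m+1) => (u σ' - u σ) ^ 2 * b ⟪(σ' : E (m+1)), (σ : E (m+1))⟫) (sphMeasure (m+1)) := by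
    intro σ
    refine Integrable.mono' (hW σ)
      ((hG2meas.comp measurable_prodMk_left).aestronglyMeasurable)
      (Filter.Eventually.of_forall fun σ' => ?_)
    have hcomm : ⟪(σ : E (m+1)), (σ' : E (m+1))⟫ = ⟪(σ' : E (m+1)), (σ : E (m+1))⟫ := real_inner_comm _ _
    rw [hcomm, Real.norm_eq_abs, abs_of_nonneg (mul_nonneg (sq_nonneg _) (hbnn σ σ'))]
    have h1 : (u σ' - u σ) ^ 2 * b ⟪(σ' : E (m+1)), (σ : E (m+1))⟫
        ≤ (C * (1 - ⟪(σ' : E (m+1)), (σ : E (m+1))⟫ ^ 2)) * b ⟪(σ' : E (m+1)), (σ : E (m+1))⟫ :=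
      mul_le_mul_of_nonneg_right (hCb σ σ') (hbnn σ σ')
    have h2 : (0:ℝ) ≤ (1 - ⟪(σ' : E (m+1)), (σ : E (m+1))⟫ ^ 2) * b ⟪(σ' : E (m+1)), (σ : E (m+1))⟫ :=
      mul_nonneg (ht2 σ σ') (hbnn σ σ')
    nlinarith
  have hg1i : ∀ σ : Sph (m+1), Integrable
      (fun σ' : Sph (m+1) => (f σ' - f σ) ^ 2 / (f σ' + f σ) * b ⟪(σ' : E (m+1)), (σ : E (m+1))⟫)
      (sphMeasure (m+1)) := by
    intro σ
    refine Integrable.mono' (hW σ)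
      ((hG1meas.comp measurable_prodMk_left).aestronglyMeasurable)
      (Filter.Eventually.of_forall fun σ' => ?_)
    have hcomm : ⟪(σ : E (m+1)), (σ' : E (m+1))⟫ = ⟪(σ' : E (m+1)), (σ : E (m+1))⟫ := real_inner_comm _ _
    rw [hcomm, Real.norm_eq_abs, abs_of_nonneg (mul_nonneg
      (div_nonneg (sq_nonneg _) (by linarith [hfpos σ', hfpos σ])) (hbnn σ σ'))]
    have hr : (f σ' - f σ) ^ 2 / (f σ' + f σ) ≤ 2 * (u σ' - u σ) ^ 2 := by
      simpa [hfu] using ratio_le_sqrt (f σ') (f σ) (hfpos σ') (hfpos σ)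
    have h1 : (f σ' - f σ) ^ 2 / (f σ' + f σ) * b ⟪(σ' : E (m+1)), (σ : E (m+1))⟫
        ≤ (2 * (u σ' - u σ) ^ 2) * b ⟪(σ' : E (m+1)), (σ : E (m+1))⟫ :=
      mul_le_mul_of_nonneg_right hr (hbnn σ σ')
    have h2 : (u σ' - u σ) ^ 2 * b ⟪(σ' : E (m+1)), (σ : E (m+1))⟫
        ≤ (C * (1 - ⟪(σ' : E (m+1)), (σ : E (m+1))⟫ ^ 2)) * b ⟪(σ' : E (m+1)), (σ : E (m+1))⟫ :=
      mul_le_mul_of_nonneg_right (hCb σ σ') (hbnn σ σ')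
    nlinarith
  -- pointwise comparison of the two inner integrands
  have hg2_le_g1 : ∀ σ σ' : Sph (m+1),
      (u σ' - u σ) ^ 2 * b ⟪(σ' : E (m+1)), (σ : E (m+1))⟫
        ≤ (f σ' - f σ) ^ 2 / (f σ' + f σ) * b ⟪(σ' : E (m+1)), (σ : E (m+1))⟫ := by
    intro σ σ'
    refine mul_le_mul_of_nonneg_right ?_ (hbnn σ σ')
    simpa [hfu] using sqrt_le_ratio (f σ') (f σ) (hfpos σ') (hfpos σ)
  have hg1_le_2g2 : ∀ σ σ' : Sph (m+1),
      (f σ' - f σ) ^ 2 / (f σ' + f σ) * b ⟪(σ' : E (m+1)), (σ : E (m+1))⟫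
        ≤ 2 * ((u σ' - u σ) ^ 2 * b ⟪(σ' : E (m+1)), (σ : E (m+1))⟫) := by
    intro σ σ'
    rw [← mul_assoc]
    refine mul_le_mul_of_nonneg_right ?_ (hbnn σ σ')
    simpa [hfu] using ratio_le_sqrt (f σ') (f σ) (hfpos σ') (hfpos σ)
  -- the two outer functions
  have hApt : ∀ σ : Sph (m+1),
      (∫ σ' : Sph (m+1), (f σ' - f σ) ^ 2 / (f σ' + f σ) * b ⟪(σ' : E (m+1)), (σ : E (m+1))⟫ ∂(sphMeasure (m+1)))
        ≤ 2 * ∫ σ' : Sph (m+1), (u σ' - u σ) ^ 2 * b ⟪(σ' : E (m+1)), (σ : E (m+1))⟫ ∂(sphMeasure (m+1)) := by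
    intro σ
    rw [← integral_const_mul]
    exact integral_mono (hg1i σ) ((hg2i σ).const_mul 2) (hg1_le_2g2 σ)
  have hBpt : ∀ σ : Sph (m+1),
      (∫ σ' : Sph (m+1), (u σ' - u σ) ^ 2 * b ⟪(σ' : E (m+1)), (σ : E (m+1))⟫ ∂(sphMeasure (m+1)))
        ≤ ∫ σ' : Sph (m+1), (f σ' - f σ) ^ 2 / (f σ' + f σ) * b ⟪(σ' : E (m+1)), (σ : E (m+1))⟫
            ∂(sphMeasure (m+1)) :=
    fun σ => integral_mono (hg2i σ) (hg1i σ) (hg2_le_g1 σ)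
  have hA0 : ∀ σ : Sph (m+1), 0 ≤
      ∫ σ' : Sph (m+1), (f σ' - f σ) ^ 2 / (f σ' + f σ) * b ⟪(σ' : E (m+1)), (σ : E (m+1))⟫
        ∂(sphMeasure (m+1)) :=
    fun σ => integral_nonneg fun σ' =>
      mul_nonneg (div_nonneg (sq_nonneg _) (by linarith [hfpos σ', hfpos σ])) (hbnn σ σ')
  have hB0 : ∀ σ : Sph (m+1), 0 ≤
      ∫ σ' : Sph (m+1), (u σ' - u σ) ^ 2 * b ⟪(σ' : E (m+1)), (σ : E (m+1))⟫ ∂(sphMeasure (m+1)) :=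
    fun σ => integral_nonneg fun σ' => mul_nonneg (sq_nonneg _) (hbnn σ σ')
  -- measurability of the outer function B
  have hBasm : AEStronglyMeasurable
      (fun σ : Sph (m+1) =>
        ∫ σ' : Sph (m+1), (u σ' - u σ) ^ 2 * b ⟪(σ' : E (m+1)), (σ : E (m+1))⟫ ∂(sphMeasure (m+1)))
      (sphMeasure (m+1)) :=
    (hG2meas.aestronglyMeasurable
      (μ := (sphMeasure (m+1)).prod (sphMeasure (m+1)))).integral_prod_right'
  -- nonnegativity of the right-hand side pieces
  have hGamma := hGamma2 f hf hfpos hfe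
  have hlogint0 : 0 ≤ ∫ σ : Sph (m+1), ‖sphGrad (fun τ => Real.log (f τ)) σ‖ ^ 2 * f σ
      ∂(sphMeasure (m+1)) :=
    integral_nonneg fun σ => mul_nonneg (sq_nonneg _) (hfpos σ).le
  by_cases hBint : Integrable
      (fun σ : Sph (m+1) =>
        ∫ σ' : Sph (m+1), (u σ' - u σ) ^ 2 * b ⟪(σ' : E (m+1)), (σ : E (m+1))⟫ ∂(sphMeasure (m+1)))
      (sphMeasure (m+1))
  · -- the integrable case
    have hIA : (∫ σ : Sph (m+1), (∫ σ' : Sph (m+1),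
          (f σ' - f σ) ^ 2 / (f σ' + f σ) * b ⟪(σ' : E (m+1)), (σ : E (m+1))⟫ ∂(sphMeasure (m+1)))
          ∂(sphMeasure (m+1)))
        ≤ 2 * ∫ σ : Sph (m+1), (∫ σ' : Sph (m+1),
          (u σ' - u σ) ^ 2 * b ⟪(σ' : E (m+1)), (σ : E (m+1))⟫ ∂(sphMeasure (m+1))) ∂(sphMeasure (m+1)) := by
      rw [← integral_const_mul]
      exact integral_mono_of_nonneg (Filter.Eventually.of_forall hA0) (hBint.const_mul 2)
        (Filter.Eventually.of_forall hApt)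
    have hHar := hHardy u hus hupos hue
    have hgradnn : 0 ≤ ∫ σ : Sph (m+1), ‖sphGrad u σ‖ ^ 2 ∂(sphMeasure (m+1)) :=
      integral_nonneg fun σ => sq_nonneg _
    have hident : (∫ σ : Sph (m+1), ‖sphGrad (fun τ => Real.log (f τ)) σ‖ ^ 2 * f σ ∂(sphMeasure (m+1)))
        = 4 * ∫ σ : Sph (m+1), ‖sphGrad u σ‖ ^ 2 ∂(sphMeasure (m+1)) := by
      rw [← integral_const_mul]
      exact integral_congr_ae (Filter.Eventually.of_forall fun σ =>
        grad_identity hf hfpos σ)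
    have hBI0 : 0 ≤ ∫ σ : Sph (m+1), (∫ σ' : Sph (m+1),
        (u σ' - u σ) ^ 2 * b ⟪(σ' : E (m+1)), (σ : E (m+1))⟫ ∂(sphMeasure (m+1))) ∂(sphMeasure (m+1)) :=
      integral_nonneg hB0
    have hc0 : (0:ℝ) ≤ 2 * CK / CP := by positivity
    calc 2 * CK / CP * ∫ σ : Sph (m+1), (∫ σ' : Sph (m+1),
          (f σ' - f σ) ^ 2 / (f σ' + f σ) * b ⟪(σ' : E (m+1)), (σ : E (m+1))⟫ ∂(sphMeasure (m+1)))
          ∂(sphMeasure (m+1))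
        ≤ 2 * CK / CP * (2 * ∫ σ : Sph (m+1), (∫ σ' : Sph (m+1),
            (u σ' - u σ) ^ 2 * b ⟪(σ' : E (m+1)), (σ : E (m+1))⟫ ∂(sphMeasure (m+1))) ∂(sphMeasure (m+1))) :=
          mul_le_mul_of_nonneg_left hIA hc0
      _ ≤ 2 * CK / CP * (2 * (CP * ∫ σ : Sph (m+1), ‖sphGrad u σ‖ ^ 2 ∂(sphMeasure (m+1)))) := by
          refine mul_le_mul_of_nonneg_left ?_ hc0
          linarith [hHar]
      _ = CK * (4 * ∫ σ : Sph (m+1), ‖sphGrad u σ‖ ^ 2 ∂(sphMeasure (m+1))) := by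
          field_simp
          ring
      _ = CK * ∫ σ : Sph (m+1), ‖sphGrad (fun τ => Real.log (f τ)) σ‖ ^ 2 * f σ ∂(sphMeasure (m+1)) := by
          rw [hident]
      _ ≤ ∫ σ : Sph (m+1), Gamma2BD b (fun τ => Real.log (f τ)) σ * f σ ∂(sphMeasure (m+1)) := hGamma
  · -- the non-integrable case: the left-hand side integral is (junk) zero
    have hAnint : ¬ Integrable
        (fun σ : Sph (m+1) => ∫ σ' : Sph (m+1),
          (f σ' - f σ) ^ 2 / (f σ' + f σ) * b ⟪(σ' : E (m+1)), (σ : E (m+1))⟫ ∂(sphMeasure (m+1)))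
        (sphMeasure (m+1)) := by
      intro hA
      exact hBint (Integrable.mono' hA hBasm (Filter.Eventually.of_forall fun σ => by
        rw [Real.norm_eq_abs, abs_of_nonneg (hB0 σ)]
        exact hBpt σ))
    rw [integral_undef hAnint, mul_zero]
    exact le_trans (mul_nonneg hCK.le hlogint0) hGamma
end
end

section
/- Let d ≥ 2, let b be a collision kernel satisfying the Lévy condition, let σ ∈ S^{d-1}, and let x ∈ ℝ^d with x·σ = 0. Then, with M_{σ,σ'}(x) := (σ·σ')x − (σ'·x)σ, one has the exact identity: ∫_{S^{d-1}} ( |x|² − |M_{σ,σ'}(x)|² ) b(σ·σ') dσ' = ((d−2)/(d−1)) · |x|² · ∫_{S^{d-1}} (1 − (σ·σ')²) b(σ·σ') dσ'. -/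
open MeasureTheory
open scoped RealInnerProductSpace

noncomputable section

/-- The map `M_{a,c}(x) = (a·c) x − (c·x) a`, sending the tangent space at `a` to the
tangent space at `c`. -/
def Mmap {d : ℕ} (a c x : E d) : E d := ⟪a, c⟫ • x - ⟪c, x⟫ • a

namespace MDefectAux

variable {d : ℕ}

/-- A linear isometry equivalence of `E d` restricts to an isometry equivalence of the sphere. -/
def sphereMap (R : E d ≃ₗᵢ[ℝ] E d) : Sph d ≃ᵢ Sph d where
  toFun p := ⟨R p, by
    rw [mem_sphere_zero_iff_norm, R.norm_map]
    exact mem_sphere_zero_iff_norm.mp p.2⟩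
  invFun p := ⟨R.symm p, by
    rw [mem_sphere_zero_iff_norm, R.symm.norm_map]
    exact mem_sphere_zero_iff_norm.mp p.2⟩
  left_inv p := Subtype.ext (R.symm_apply_apply p)
  right_inv p := Subtype.ext (R.apply_symm_apply p)
  isometry_toFun := Isometry.of_dist_eq fun p q => by
    simp [Subtype.dist_eq, R.dist_map]

lemma sphereMap_coe (R : E d ≃ₗᵢ[ℝ] E d) (p : Sph d) :
    ((sphereMap R p : Sph d) : E d) = R (p : E d) := rfl

lemma integral_comp_sphereMap (R : E d ≃ₗᵢ[ℝ] E d) (f : Sph d → ℝ) :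
    ∫ p, f (sphereMap R p) ∂(sphMeasure d) = ∫ p, f p ∂(sphMeasure d) := by
  simp only [sphMeasure]
  exact ((sphereMap R).measurePreserving_hausdorffMeasure ((d : ℝ) - 1)).integral_comp
    (sphereMap R).toHomeomorph.measurableEmbedding f

lemma exists_isometry_fixing (σ u v : E d) (huv : ‖u‖ = ‖v‖)
    (h1 : ⟪u, σ⟫ = 0) (h2 : ⟪v, σ⟫ = 0) :
    ∃ R : E d ≃ₗᵢ[ℝ] E d, R u = v ∧ R σ = σ := by
  by_cases h : u = v
  · exact ⟨LinearIsometryEquiv.refl ℝ (E d), by simp [h]⟩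
  · refine ⟨Submodule.reflection (ℝ ∙ (u - v))ᗮ, Submodule.reflection_sub huv, ?_⟩
    apply Submodule.reflection_mem_subspace_eq_self
    rw [Submodule.mem_orthogonal_singleton_iff_inner_left]
    rw [real_inner_comm, inner_sub_left, h1, h2, sub_zero]

lemma inner_sq_le (σ σ' : Sph d) (u : E d) (hu : ‖u‖ = 1) (huσ : ⟪u, (σ : E d)⟫ = 0) :
    ⟪(σ' : E d), u⟫ ^ 2 ≤ 1 - ⟪(σ : E d), (σ' : E d)⟫ ^ 2 := by
  have hσ : ‖(σ : E d)‖ = 1 := mem_sphere_zero_iff_norm.mp σ.2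
  have hσ' : ‖(σ' : E d)‖ = 1 := mem_sphere_zero_iff_norm.mp σ'.2
  have h00 : ⟪u, u⟫ = 1 := by rw [real_inner_self_eq_norm_sq, hu]; norm_num
  have h11 : ⟪(σ : E d), (σ : E d)⟫ = 1 := by rw [real_inner_self_eq_norm_sq, hσ]; norm_num
  have h10 : ⟪(σ : E d), u⟫ = 0 := by rw [real_inner_comm]; exact huσ
  have horth : Orthonormal ℝ ![u, (σ : E d)] := by
    rw [orthonormal_iff_ite]
    intro i j
    fin_cases i <;> fin_cases j
    · rw [if_pos rfl]; exact h00
    · rw [if_neg (by decide)]; exact huσ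
    · rw [if_neg (by decide)]; exact h10
    · rw [if_pos rfl]; exact h11
  have hb2 := horth.sum_inner_products_le (s := Finset.univ) (σ' : E d)
  rw [Fin.sum_univ_two] at hb2
  have e0 : (![u, (σ : E d)] 0) = u := rfl
  have e1 : (![u, (σ : E d)] 1) = (σ : E d) := rfl
  rw [e0, e1, hσ', Real.norm_eq_abs, Real.norm_eq_abs, sq_abs, sq_abs, one_pow] at hb2
  have c1 : ⟪u, (σ' : E d)⟫ = ⟪(σ' : E d), u⟫ := real_inner_comm _ _
  rw [c1] at hb2
  linarith

lemma abs_inner_le_one (σ σ' : Sph d) : ⟪(σ : E d), (σ' : E d)⟫ ∈ Set.Icc (-1 : ℝ) 1 := by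
  have hσ : ‖(σ : E d)‖ = 1 := mem_sphere_zero_iff_norm.mp σ.2
  have hσ' : ‖(σ' : E d)‖ = 1 := mem_sphere_zero_iff_norm.mp σ'.2
  have := abs_real_inner_le_norm (σ : E d) (σ' : E d)
  rw [hσ, hσ', one_mul] at this
  exact abs_le.mp this

lemma meas_inner (a : E d) : Measurable fun σ' : Sph d => ⟪a, (σ' : E d)⟫ :=
  (Continuous.inner continuous_const continuous_subtype_val).measurable

lemma meas_inner' (a : E d) : Measurable fun σ' : Sph d => ⟪(σ' : E d), a⟫ :=
  (Continuous.inner continuous_subtype_val continuous_const).measurable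

lemma integrable_Tint (b : ℝ → ℝ) (hb : LevyKernel d b) (σ : Sph d) (u : E d)
    (hu : ‖u‖ = 1) (huσ : ⟪u, (σ : E d)⟫ = 0) :
    Integrable (fun σ' : Sph d => ⟪(σ' : E d), u⟫ ^ 2 * b ⟪(σ : E d), (σ' : E d)⟫)
      (sphMeasure d) := by
  refine (hb.2.2 σ).mono ?_ ?_
  · exact (((meas_inner' u).pow_const 2).mul
      (hb.1.comp (meas_inner (σ : E d)))).aestronglyMeasurable
  · refine Filter.Eventually.of_forall fun σ' => ?_
    have hbnn : 0 ≤ b ⟪(σ : E d), (σ' : E d)⟫ := hb.2.1 _ (abs_inner_le_one σ σ')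
    have h1 := inner_sq_le σ σ' u hu huσ
    have h2 : (0 : ℝ) ≤ ⟪(σ' : E d), u⟫ ^ 2 := sq_nonneg _
    rw [Real.norm_eq_abs, Real.norm_eq_abs, abs_of_nonneg (mul_nonneg h2 hbnn),
      abs_of_nonneg (mul_nonneg (by linarith) hbnn)]
    exact mul_le_mul_of_nonneg_right h1 hbnn

lemma Tint_swap (b : ℝ → ℝ) (σ : Sph d) (u v : E d) (hu : ‖u‖ = 1) (hv : ‖v‖ = 1)
    (h1 : ⟪u, (σ : E d)⟫ = 0) (h2 : ⟪v, (σ : E d)⟫ = 0) :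
    ∫ σ' : Sph d, ⟪(σ' : E d), u⟫ ^ 2 * b ⟪(σ : E d), (σ' : E d)⟫ ∂(sphMeasure d)
      = ∫ σ' : Sph d, ⟪(σ' : E d), v⟫ ^ 2 * b ⟪(σ : E d), (σ' : E d)⟫ ∂(sphMeasure d) := by
  obtain ⟨R, hRu, hRσ⟩ := exists_isometry_fixing (σ : E d) u v (hu.trans hv.symm) h1 h2
  rw [← integral_comp_sphereMap R
    (fun σ' : Sph d => ⟪(σ' : E d), v⟫ ^ 2 * b ⟪(σ : E d), (σ' : E d)⟫)]
  congr 1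
  funext p
  have hinner1 : ⟪R (p : E d), v⟫ = ⟪(p : E d), u⟫ := by
    rw [← hRu]; exact R.inner_map_map _ _
  have hinner2 : ⟪(σ : E d), R (p : E d)⟫ = ⟪(σ : E d), (p : E d)⟫ := by
    conv_lhs => rw [← hRσ]
    exact R.inner_map_map _ _
  simp only [sphereMap_coe, hinner1, hinner2]

/-- The key averaging identity: for `x ⊥ σ`, the integral of `⟪σ', x⟫²` against the kernel
is `‖x‖²/(d-1)` times the Lévy integral. -/
lemma key (d : ℕ) (hd : 2 ≤ d) (b : ℝ → ℝ) (hb : LevyKernel d b) (σ : Sph d)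
    (x : E d) (hx : ⟪x, (σ : E d)⟫ = 0) :
    Integrable (fun σ' : Sph d => ⟪(σ' : E d), x⟫ ^ 2 * b ⟪(σ : E d), (σ' : E d)⟫)
        (sphMeasure d) ∧
    ∫ σ' : Sph d, ⟪(σ' : E d), x⟫ ^ 2 * b ⟪(σ : E d), (σ' : E d)⟫ ∂(sphMeasure d)
      = ‖x‖ ^ 2 / ((d : ℝ) - 1) *
        ∫ σ' : Sph d, (1 - ⟪(σ : E d), (σ' : E d)⟫ ^ 2) * b ⟪(σ : E d), (σ' : E d)⟫
          ∂(sphMeasure d) := by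
  have hd1 : ((d : ℝ) - 1) ≠ 0 := by
    have : (2 : ℝ) ≤ (d : ℝ) := by exact_mod_cast hd
    linarith
  rcases eq_or_ne x 0 with rfl | hx0
  · constructor
    · simp only [inner_zero_right, ne_eq, OfNat.ofNat_ne_zero, not_false_eq_true,
        zero_pow, zero_mul]
      exact integrable_zero _ ℝ (sphMeasure d)
    · simp
  -- the unit vector in the direction of x
  set u : E d := ‖x‖⁻¹ • x with hu_def
  have hxn : ‖x‖ ≠ 0 := norm_ne_zero_iff.mpr hx0
  have hu : ‖u‖ = 1 := norm_smul_inv_norm hx0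
  have huσ : ⟪u, (σ : E d)⟫ = 0 := by
    rw [hu_def, real_inner_smul_left, hx, mul_zero]
  have hscale : ∀ σ' : Sph d, ⟪(σ' : E d), x⟫ ^ 2 = ‖x‖ ^ 2 * ⟪(σ' : E d), u⟫ ^ 2 := by
    intro σ'
    rw [hu_def, real_inner_smul_right, mul_pow]
    field_simp
  -- adapted orthonormal basis with first vector σ
  have hσn : ‖(σ : E d)‖ = 1 := mem_sphere_zero_iff_norm.mp σ.2
  have i0 : Fin d := ⟨0, by omega⟩
  set B := EuclideanSpace.basisFun (Fin d) ℝ with hB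
  have hBn : ‖B ⟨0, by omega⟩‖ = 1 := B.orthonormal.1 _
  obtain ⟨R0, hR0, -⟩ := exists_isometry_fixing (0 : E d) (B ⟨0, by omega⟩) (σ : E d)
    (by rw [hBn, hσn]) (inner_zero_right _) (inner_zero_right _)
  set v : OrthonormalBasis (Fin d) ℝ (E d) := B.map R0 with hv
  have hv0 : v ⟨0, by omega⟩ = (σ : E d) := by
    show (B.map R0) ⟨0, by omega⟩ = (σ : E d)
    rw [B.map_apply, hR0]
  have hvn : ∀ i, ‖v i‖ = 1 := v.orthonormal.1
  have hvo : ∀ i, i ≠ ⟨0, by omega⟩ → ⟪v i, (σ : E d)⟫ = 0 := by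
    intro i hi
    rw [← hv0]
    exact v.orthonormal.2 hi
  set s : Finset (Fin d) := Finset.univ.erase ⟨0, by omega⟩ with hs
  -- Parseval-type identity
  have hpars : ∀ σ' : Sph d,
      ∑ i ∈ s, ⟪(σ' : E d), v i⟫ ^ 2 = 1 - ⟪(σ : E d), (σ' : E d)⟫ ^ 2 := by
    intro σ'
    have hsum : ∑ i, ⟪(σ' : E d), v i⟫ * ⟪v i, (σ' : E d)⟫ = ⟪(σ' : E d), (σ' : E d)⟫ :=
      v.sum_inner_mul_inner _ _
    have hσ' : ‖(σ' : E d)‖ = 1 := mem_sphere_zero_iff_norm.mp σ'.2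
    have hself : ⟪(σ' : E d), (σ' : E d)⟫ = 1 := by
      rw [real_inner_self_eq_norm_sq, hσ', one_pow]
    have hsq : ∀ i, ⟪(σ' : E d), v i⟫ * ⟪v i, (σ' : E d)⟫ = ⟪(σ' : E d), v i⟫ ^ 2 := by
      intro i; rw [real_inner_comm (v i), sq]
    rw [Finset.sum_congr rfl (fun i _ => hsq i), hself] at hsum
    have herase : ⟪(σ' : E d), v ⟨0, by omega⟩⟫ ^ 2 + ∑ i ∈ s, ⟪(σ' : E d), v i⟫ ^ 2
        = ∑ i, ⟪(σ' : E d), v i⟫ ^ 2 := by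
      rw [hs]
      exact Finset.add_sum_erase Finset.univ (fun i => ⟪(σ' : E d), v i⟫ ^ 2) (Finset.mem_univ _)
    rw [hsum, hv0] at herase
    have hcomm : ⟪(σ' : E d), (σ : E d)⟫ = ⟪(σ : E d), (σ' : E d)⟫ := real_inner_comm _ _
    rw [hcomm] at herase
    linarith
  -- all T-integrals over s agree
  have i1m : (⟨1, by omega⟩ : Fin d) ∈ s := by
    rw [hs]
    exact Finset.mem_erase.mpr ⟨by simp [Fin.ext_iff], Finset.mem_univ _⟩
  set I : ℝ := ∫ σ' : Sph d, ⟪(σ' : E d), v ⟨1, by omega⟩⟫ ^ 2 * b ⟪(σ : E d), (σ' : E d)⟫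
    ∂(sphMeasure d) with hI
  have hTconst : ∀ i ∈ s,
      (∫ σ' : Sph d, ⟪(σ' : E d), v i⟫ ^ 2 * b ⟪(σ : E d), (σ' : E d)⟫ ∂(sphMeasure d)) = I := by
    intro i hi
    rw [hs, Finset.mem_erase] at hi
    exact Tint_swap b σ (v i) (v ⟨1, by omega⟩) (hvn i) (hvn _) (hvo i hi.1)
      (hvo _ (by simp [Fin.ext_iff, show (1:ℕ) ≠ 0 by omega]))
  -- and T of u equals I as well
  have hTu : (∫ σ' : Sph d, ⟪(σ' : E d), u⟫ ^ 2 * b ⟪(σ : E d), (σ' : E d)⟫ ∂(sphMeasure d)) = I :=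
    Tint_swap b σ u (v ⟨1, by omega⟩) hu (hvn _) huσ
      (hvo _ (by simp [Fin.ext_iff, show (1:ℕ) ≠ 0 by omega]))
  -- summing the T-integrals gives the Lévy integral
  have hsumint :
      ∫ σ' : Sph d, (1 - ⟪(σ : E d), (σ' : E d)⟫ ^ 2) * b ⟪(σ : E d), (σ' : E d)⟫ ∂(sphMeasure d)
        = ((d : ℝ) - 1) * I := by
    have hptw : ∀ σ' : Sph d,
        (1 - ⟪(σ : E d), (σ' : E d)⟫ ^ 2) * b ⟪(σ : E d), (σ' : E d)⟫
          = ∑ i ∈ s, ⟪(σ' : E d), v i⟫ ^ 2 * b ⟪(σ : E d), (σ' : E d)⟫ := by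
      intro σ'
      rw [← Finset.sum_mul, hpars σ']
    rw [integral_congr_ae (Filter.Eventually.of_forall hptw)]
    rw [integral_finset_sum s (fun i hi => integrable_Tint b hb σ (v i) (hvn i)
      (hvo i (Finset.mem_erase.mp (hs ▸ hi)).1))]
    rw [Finset.sum_congr rfl hTconst, Finset.sum_const, nsmul_eq_mul]
    congr 1
    rw [hs, Finset.card_erase_of_mem (Finset.mem_univ _), Finset.card_univ, Fintype.card_fin]
    rw [Nat.cast_sub (by omega)]
    norm_num
  constructor
  · have : (fun σ' : Sph d => ⟪(σ' : E d), x⟫ ^ 2 * b ⟪(σ : E d), (σ' : E d)⟫)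
        = fun σ' : Sph d => ‖x‖ ^ 2 * (⟪(σ' : E d), u⟫ ^ 2 * b ⟪(σ : E d), (σ' : E d)⟫) := by
      funext σ'; rw [hscale σ', mul_assoc]
    rw [this]
    exact (integrable_Tint b hb σ u hu huσ).const_mul _
  · have : (fun σ' : Sph d => ⟪(σ' : E d), x⟫ ^ 2 * b ⟪(σ : E d), (σ' : E d)⟫)
        = fun σ' : Sph d => ‖x‖ ^ 2 * (⟪(σ' : E d), u⟫ ^ 2 * b ⟪(σ : E d), (σ' : E d)⟫) := by
      funext σ'; rw [hscale σ', mul_assoc]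
    rw [this, integral_const_mul, hTu, hsumint]
    field_simp

lemma Mmap_norm_sq (σ σ' : Sph d) (x : E d) (hx : ⟪x, (σ : E d)⟫ = 0) :
    ‖Mmap (σ : E d) (σ' : E d) x‖ ^ 2
      = ⟪(σ : E d), (σ' : E d)⟫ ^ 2 * ‖x‖ ^ 2 + ⟪(σ' : E d), x⟫ ^ 2 := by
  have hσ : ‖(σ : E d)‖ = 1 := mem_sphere_zero_iff_norm.mp σ.2
  rw [Mmap, norm_sub_sq_real]
  rw [real_inner_smul_left, real_inner_smul_right, hx, mul_zero, mul_zero]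
  rw [norm_smul, norm_smul, mul_pow, mul_pow, Real.norm_eq_abs, Real.norm_eq_abs,
    sq_abs, sq_abs, hσ]
  ring

end MDefectAux


/-- Exact identity for the defect `|x|² - |M_{σ,σ'}(x)|²` integrated
against the kernel, for `x` tangent to the sphere at `σ`. -/
theorem M_defect_identity
    (d : ℕ) (hd : 2 ≤ d) (b : ℝ → ℝ) (hb : LevyKernel d b)
    (σ : Sph d) (x : E d) (hx : ⟪x, (σ : E d)⟫ = 0) :
    ∫ (σ' : Sph d),
        (‖x‖ ^ 2 - ‖Mmap (σ : E d) (σ' : E d) x‖ ^ 2) * b ⟪(σ : E d), (σ' : E d)⟫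
      ∂(sphMeasure d)
    = ((d : ℝ) - 2) / ((d : ℝ) - 1) * ‖x‖ ^ 2 *
        ∫ (σ' : Sph d),
          (1 - ⟪(σ : E d), (σ' : E d)⟫ ^ 2) * b ⟪(σ : E d), (σ' : E d)⟫ ∂(sphMeasure d) := by
  obtain ⟨hint, hkey⟩ := MDefectAux.key d hd b hb σ x hx
  have hlevy := hb.2.2 σ
  have hptw : (fun σ' : Sph d =>
        (‖x‖ ^ 2 - ‖Mmap (σ : E d) (σ' : E d) x‖ ^ 2) * b ⟪(σ : E d), (σ' : E d)⟫)
      = fun σ' : Sph d =>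
        ‖x‖ ^ 2 * ((1 - ⟪(σ : E d), (σ' : E d)⟫ ^ 2) * b ⟪(σ : E d), (σ' : E d)⟫)
          - ⟪(σ' : E d), x⟫ ^ 2 * b ⟪(σ : E d), (σ' : E d)⟫ := by
    funext σ'
    rw [MDefectAux.Mmap_norm_sq σ σ' x hx]
    ring
  rw [hptw, integral_sub (hlevy.const_mul _) hint, integral_const_mul, hkey]
  have hd1 : ((d : ℝ) - 1) ≠ 0 := by
    have : (2 : ℝ) ≤ (d : ℝ) := by exact_mod_cast hd
    linarith
  field_simp
  ring
end
end
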